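/- Let H₁, …, Hₙ be finite-dimensional complex inner product spaces, let ψ be a unit vector in H₁⊗⋯⊗Hₙ, and let a₁, …, aₙ be unit vectors, aₖ ∈ Hₖ, such that the product state a₁⊗⋯⊗aₙ maximizes the overlap with ψ in each tensor slot separately: for every index k and every unit vector x ∈ Hₖ, replacing aₖ by x does not increase |⟨a₁⊗⋯⊗aₙ, ψ⟩|. Then for every index k and every vector b ∈ Hₖ with b ⊥ aₖ, the vector obtained from a₁⊗⋯⊗aₙ by replacing aₖ with b satisfies ⟨a₁⊗⋯⊗b⊗⋯⊗aₙ, ψ⟩ = 0. -/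

import Mathlib

/-!
Fixing every factor but the `k`-th, `T x = a₁ ⊗ ⋯ ⊗ x ⊗ ⋯ ⊗ aₙ` is linear in `x`, so the
overlap `⟪T x, ψ⟫` equals `⟪x, w⟫` with `w = T† ψ`. Over unit vectors `x`, `‖⟪x, w⟫‖`
reaches `‖w‖` at `x = w / ‖w‖`, so maximality at `aₖ` is the equality case of Cauchy–Schwarz:
`w` is a multiple of `aₖ`, hence orthogonal to every `b ⊥ aₖ`.
-/

open scoped ComplexInnerProductSpace

/-- The product state `a₁ ⊗ ⋯ ⊗ aₙ` of `n` parties with local dimensions `d k`, as a vector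
in `H₁ ⊗ ⋯ ⊗ Hₙ ≃ ℂ^(Π k, d k)` with the standard inner product, so that
`⟪prodState a, prodState x⟫ = ∏ k, ⟪a k, x k⟫`. -/
noncomputable def prodState {n : ℕ} {d : Fin n → ℕ}
    (a : ∀ k, EuclideanSpace ℂ (Fin (d k))) :
    EuclideanSpace ℂ (∀ k, Fin (d k)) :=
  WithLp.toLp 2 (fun f => ∏ k, a k (f k))

open scoped InnerProductSpace

section MaxOverlap

variable {𝕜 E : Type*} [RCLike 𝕜] [NormedAddCommGroup E] [InnerProductSpace 𝕜 E]

theorem exists_eq_smul_of_forall_norm_inner_le {a w : E} (ha : ‖a‖ = 1)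
    (hmax : ∀ x : E, ‖x‖ = 1 → ‖⟪x, w⟫_𝕜‖ ≤ ‖⟪a, w⟫_𝕜‖) : ∃ r : 𝕜, w = r • a := by
  rcases eq_or_ne w 0 with rfl | hw
  · exact ⟨0, by simp⟩
  have hle : ‖w‖ ≤ ‖⟪a, w⟫_𝕜‖ :=
    calc ‖w‖ = ‖⟪(‖w‖⁻¹ : 𝕜) • w, w⟫_𝕜‖ := by
          rw [inner_smul_left, inner_self_eq_norm_sq_to_K, norm_mul, norm_pow]
          simp only [map_inv₀, RCLike.conj_ofReal, norm_inv, norm_algebraMap', norm_norm]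
          field_simp
      _ ≤ ‖⟪a, w⟫_𝕜‖ := hmax _ (norm_smul_inv_norm hw)
  have ha0 : a ≠ 0 := norm_ne_zero_iff.mp (by simp [ha])
  obtain ⟨r, -, hr⟩ := (norm_inner_eq_norm_iff ha0 hw).mp <|
    le_antisymm (by simpa [ha] using norm_inner_le_norm (𝕜 := 𝕜) a w) (by simpa [ha])
  exact ⟨r, hr⟩

theorem inner_eq_zero_of_forall_norm_inner_le {a w : E} (ha : ‖a‖ = 1)
    (hmax : ∀ x : E, ‖x‖ = 1 → ‖⟪x, w⟫_𝕜‖ ≤ ‖⟪a, w⟫_𝕜‖) {b : E} (hb : ⟪b, a⟫_𝕜 = 0) :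
    ⟪b, w⟫_𝕜 = 0 := by
  obtain ⟨r, rfl⟩ := exists_eq_smul_of_forall_norm_inner_le ha hmax
  rw [inner_smul_right, hb, mul_zero]

end MaxOverlap

section ProdState

variable {n : ℕ} {d : Fin n → ℕ}

noncomputable def prodStateCoord (f : ∀ k, Fin (d k)) :
    MultilinearMap ℂ (fun k => EuclideanSpace ℂ (Fin (d k))) ℂ :=
  (MultilinearMap.mkPiAlgebra ℂ (Fin n) ℂ).compLinearMap
    fun k => (EuclideanSpace.proj (f k)).toLinearMap

theorem prodStateCoord_apply (f : ∀ k, Fin (d k)) (a : ∀ k, EuclideanSpace ℂ (Fin (d k))) :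
    prodStateCoord f a = prodState a f :=
  rfl

noncomputable def prodStateMultilinear :
    MultilinearMap ℂ (fun k => EuclideanSpace ℂ (Fin (d k)))
      (EuclideanSpace ℂ (∀ k, Fin (d k))) where
  toFun := prodState
  map_update_add' a k x y := by
    ext f
    simpa only [prodStateCoord_apply, WithLp.ofLp_add, Pi.add_apply] using
      (prodStateCoord f).map_update_add a k x y
  map_update_smul' a k c x := by
    ext f
    simpa only [prodStateCoord_apply, WithLp.ofLp_smul, Pi.smul_apply, smul_eq_mul] using
      (prodStateCoord f).map_update_smul a k c x

end ProdState

theorem prop1_multipartite_general (n : ℕ) (d : Fin n → ℕ)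
    (ψ : EuclideanSpace ℂ (∀ k, Fin (d k)))
    (a : ∀ k, EuclideanSpace ℂ (Fin (d k))) (ha : ∀ k, ‖a k‖ = 1)
    (hmax : ∀ (k : Fin n) (x : EuclideanSpace ℂ (Fin (d k))), ‖x‖ = 1 →
      ‖⟪prodState (Function.update a k x), ψ⟫‖ ≤ ‖⟪prodState a, ψ⟫‖) :
    ∀ (k : Fin n) (b : EuclideanSpace ℂ (Fin (d k))), ⟪b, a k⟫ = 0 →
      ⟪prodState (Function.update a k b), ψ⟫ = 0 := by
  intro k b hb
  set T := prodStateMultilinear.toLinearMap a k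
  have hT : ∀ x, ⟪prodState (Function.update a k x), ψ⟫ = ⟪x, T.adjoint ψ⟫ := fun x =>
    (T.adjoint_inner_right x ψ).symm
  rw [hT]
  refine inner_eq_zero_of_forall_norm_inner_le (ha k) (fun x hx => ?_) hb
  simpa [← hT, Function.update_eq_self] using hmax k x hx

/-- **Proposition 1, multipartite version**: if the product state `a₁ ⊗ ⋯ ⊗ aₙ` maximizes the
overlap with the unit vector `ψ` in each tensor slot separately, then replacing any single
factor `aₖ` by a vector orthogonal to it yields a product vector orthogonal to `ψ`. -/
theorem prop1_multipartite (n : ℕ) (d : Fin n → ℕ)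
    (ψ : EuclideanSpace ℂ (∀ k, Fin (d k))) (hψ : ‖ψ‖ = 1)
    (a : ∀ k, EuclideanSpace ℂ (Fin (d k))) (ha : ∀ k, ‖a k‖ = 1)
    (hmax : ∀ (k : Fin n) (x : EuclideanSpace ℂ (Fin (d k))), ‖x‖ = 1 →
      ‖⟪prodState (Function.update a k x), ψ⟫‖ ≤ ‖⟪prodState a, ψ⟫‖) :
    ∀ (k : Fin n) (b : EuclideanSpace ℂ (Fin (d k))), ⟪b, a k⟫ = 0 →
      ⟪prodState (Function.update a k b), ψ⟫ = 0 :=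
  prop1_multipartite_general n d ψ a ha hmax
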